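/- arXiv:1510.04043 — 2 statements merged into one kernel-verified Lean document; each statement's English description precedes it below -/
import Mathlib

section
/- Let ν₀ be a finitely supported probability measure on ℝ and let c = inf_{√2 ≤ a ≤ 2} Φ_{ν₀}(a)/log₂ a. Then Φ_{ν₀}(a) ≥ c·min{log₂ a, 1} for all a > 1. -/
open MeasureTheory ProbabilityTheory

/-- Convolution of two measures on an additive monoid: the law of the sum of two independent
random variables with these laws. -/
noncomputable def mconv {E : Type*} [MeasurableSpace E] [Add E] (μ ν : Measure E) : Measure E :=
  (μ.prod ν).map (fun p => p.1 + p.2)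

/-- The differential entropy (base 2) `H(μ) = -∫ f log₂ f` of a measure `μ` with density `f`
with respect to Lebesgue measure (junk value if `μ` is not absolutely continuous or the
integrand is not integrable). -/
noncomputable def diffEnt {E : Type*} [MeasureSpace E] (μ : Measure E) : ℝ :=
  -∫ x, ((μ.rnDeriv volume x).toReal) * Real.logb 2 ((μ.rnDeriv volume x).toReal) ∂(volume : Measure E)

/-- `μ` is absolutely continuous with finite (i.e. well-defined) differential entropy. -/
def HasDiffEnt {E : Type*} [MeasureSpace E] (μ : Measure E) : Prop :=
  μ ≪ (volume : Measure E) ∧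
    Integrable (fun x => ((μ.rnDeriv volume x).toReal) * Real.logb 2 ((μ.rnDeriv volume x).toReal))
      (volume : Measure E)

/-- The standard Gaussian measure on `ℝ^d`. -/
noncomputable def stdGauss (d : ℕ) : Measure (Fin d → ℝ) :=
  Measure.pi (fun _ : Fin d => gaussianReal 0 1)

/-- The centered Gaussian measure on `ℝ^d` with covariance matrix `B·Bᵀ`, i.e. the law
of `G_B = B·G` for `G` standard Gaussian. -/
noncomputable def gaussMat {d : ℕ} (B : Matrix (Fin d) (Fin d) ℝ) : Measure (Fin d → ℝ) :=
  (stdGauss d).map (fun x => B.mulVec x)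

/-- `H(X; B) = H(X + G_B) - H(G_B)` where `G_B` is an independent centered Gaussian vector
with covariance `B·Bᵀ`, expressed via the law `μ` of `X`. -/
noncomputable def entAt {d : ℕ} (μ : Measure (Fin d → ℝ)) (B : Matrix (Fin d) (Fin d) ℝ) : ℝ :=
  diffEnt (mconv μ (gaussMat B)) - diffEnt (gaussMat B)

/-- `H(X; B₁ | B₂) = H(X; B₁) - H(X; B₂)`, expressed via the law `μ` of `X`. -/
noncomputable def entBetween {d : ℕ} (μ : Measure (Fin d → ℝ))
    (B₁ B₂ : Matrix (Fin d) (Fin d) ℝ) : ℝ :=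
  entAt μ B₁ - entAt μ B₂

/-- The law of `t·ξ₀` where `ξ₀` has the finitely supported law `ν` on `ℝ`. -/
noncomputable def discLaw (ν : ℝ →₀ ℝ) (t : ℝ) : MeasureTheory.Measure ℝ :=
  ∑ q ∈ ν.support, ENNReal.ofReal (ν q) • MeasureTheory.Measure.dirac (t * q)

/-- The differential entropy `H(t·ξ₀ + G)` where `G` is a standard Gaussian independent
of `ξ₀ ~ ν`. -/
noncomputable def smoothEnt (ν : ℝ →₀ ℝ) (t : ℝ) : ℝ :=
  diffEnt (mconv (discLaw ν t) (ProbabilityTheory.gaussianReal 0 1))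

/-- `Φ_ν(a) = sup_{t>0} { H(t·a·ξ₀ + G) − H(t·ξ₀ + G) }`. -/
noncomputable def Phi (ν : ℝ →₀ ℝ) (a : ℝ) : ℝ :=
  sSup {r : ℝ | ∃ t : ℝ, 0 < t ∧ r = smoothEnt ν (t * a) - smoothEnt ν t}

/-- `ν` is a finitely supported probability measure on `ℝ`. -/
def IsProbFinsuppR (ν : ℝ →₀ ℝ) : Prop := (∀ q, 0 ≤ ν q) ∧ (∑ q ∈ ν.support, ν q) = 1

/-!
Let `P_t` be the law of `t ξ₀ + G`, the mixture `∑ ν(q) N(tq, 1)`. Splitting `-∫ log p_t dP_t`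
along the mixture gives `H(t ξ₀ + G) = (½ ln(2πe) + ∑ ν(q) D(N(tq,1) ‖ P_t)) / ln 2`, the sum being
the mutual information `I(ξ₀; t ξ₀ + G)` in nats. Each divergence lies in `[0, -ln ν(q)]`, because
`P_t ≥ ν(q) N(tq,1)`; and for `|s| ≤ |t|` it is smaller at `s` than at `t` by the data processing
inequality, as `N(sq,1)` and `P_s` are the images of `N(tq,1)` and `P_t` under the same channel
`x ↦ (s/t) x + N(0, 1 - s²/t²)`. So `t ↦ H(t ξ₀ + G)` is nondecreasing on `[0, ∞)` with
oscillation at most `H(ξ₀)`, which makes `Φ` finite, nonnegative and nondecreasing on `[1, ∞)` and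
subadditive: `Φ(ab) ≤ Φ(a) + Φ(b)`. For `1 < a ≤ 2` some power `a^n` lies in `[√2, 2]`, whence
`n c log₂ a ≤ Φ(a^n) ≤ n Φ(a)`; for `a > 2`, `Φ(a) ≥ Φ(2) ≥ c`.
-/

open Real InformationTheory
open scoped ENNReal NNReal

lemma MeasureTheory.Measure.finsetSum_conv {M ι : Type*} [AddMonoid M] [MeasurableSpace M]
    [MeasurableAdd₂ M] (s : Finset ι) (μ : ι → Measure M) (η : Measure M) [∀ i, SFinite (μ i)]
    [SFinite η] :
    (∑ i ∈ s, μ i) ∗ η = ∑ i ∈ s, μ i ∗ η := by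
  classical
  induction s using Finset.induction_on with
  | empty => simp [Measure.zero_conv]
  | insert i s hi ih =>
    have : SFinite (∑ i ∈ s, μ i) := by rw [← Measure.sum_coe_finset]; infer_instance
    rw [Finset.sum_insert hi, Measure.add_conv, ih, Finset.sum_insert hi]

lemma klDiv_conv_le {M : Type*} [AddMonoid M] [MeasurableSpace M] [MeasurableAdd₂ M]
    (μ ν η : Measure M) [IsFiniteMeasure μ] [IsFiniteMeasure ν] [IsProbabilityMeasure η] :
    klDiv (μ ∗ η) (ν ∗ η) ≤ klDiv μ ν := by
  calc klDiv (μ ∗ η) (ν ∗ η) ≤ klDiv (μ ⊗ₘ Kernel.const M η) (ν ⊗ₘ Kernel.const M η) := by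
        simp only [Measure.conv, ← Measure.compProd_const]
        exact klDiv_map_le _ _ measurable_add
    _ = klDiv μ ν := klDiv_compProd_left μ ν _

lemma diffEnt_eq_neg_integral_logb_rnDeriv {E : Type*} [MeasureSpace E]
    [SigmaFinite (volume : Measure E)] {μ : Measure E} [SigmaFinite μ] (hμ : μ ≪ volume) :
    diffEnt μ = -∫ x, logb 2 (μ.rnDeriv volume x).toReal ∂μ := by
  rw [diffEnt, ← integral_rnDeriv_smul hμ]
  rfl

lemma gaussianReal_map_mul_conv {ρ : ℝ} {w : ℝ≥0} (hρw : ρ ^ 2 + w = 1) (m : ℝ) :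
    (gaussianReal m 1).map (ρ * ·) ∗ gaussianReal 0 w = gaussianReal (ρ * m) 1 := by
  rw [gaussianReal_map_const_mul, gaussianReal_conv_gaussianReal, add_zero]
  congr 1
  ext
  simpa using hρw

lemma integrable_sq_sub_gaussianReal (m : ℝ) (v : ℝ≥0) (c : ℝ) :
    Integrable (fun x => (x - c) ^ 2) (gaussianReal m v) :=
  ((memLp_id_gaussianReal 2).sub (memLp_const c)).integrable_sq

lemma integrable_of_abs_le_sq_gaussianReal {f : ℝ → ℝ} {m c A B : ℝ} {v : ℝ≥0}
    (hf : AEStronglyMeasurable f (gaussianReal m v)) (hbound : ∀ x, |f x| ≤ A + B * (x - c) ^ 2) :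
    Integrable f (gaussianReal m v) :=
  ((integrable_const A).add ((integrable_sq_sub_gaussianReal m v c).const_mul B)).mono' hf
    (.of_forall hbound)

lemma gaussianPDFReal_le {m : ℝ} {v : ℝ≥0} (x : ℝ) :
    gaussianPDFReal m v x ≤ (√(2 * π * v))⁻¹ := by
  rw [gaussianPDFReal_def]
  refine mul_le_of_le_one_right (by positivity) (exp_le_one_iff.2 ?_)
  exact div_nonpos_of_nonpos_of_nonneg (neg_nonpos.2 (sq_nonneg _)) (by positivity)

lemma log_gaussianPDFReal {m : ℝ} {v : ℝ≥0} (hv : v ≠ 0) (x : ℝ) :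
    log (gaussianPDFReal m v x) = -log √(2 * π * v) - (x - m) ^ 2 / (2 * v) := by
  have : 0 < √(2 * π * v) := by positivity
  rw [gaussianPDFReal_def, log_mul (inv_ne_zero this.ne') (exp_ne_zero _), log_inv, log_exp]
  ring

lemma integral_log_gaussianPDFReal {m : ℝ} {v : ℝ≥0} (hv : v ≠ 0) :
    ∫ x, log (gaussianPDFReal m v x) ∂gaussianReal m v = -log √(2 * π * v) - 1 / 2 := by
  have hvar : ∫ x, (x - m) ^ 2 ∂gaussianReal m v = v := by
    have := variance_id_gaussianReal (μ := m) (v := v)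
    rw [variance_eq_integral measurable_id.aemeasurable] at this
    simpa [integral_id_gaussianReal] using this
  simp_rw [log_gaussianPDFReal hv]
  rw [integral_sub (integrable_const _) ((integrable_sq_sub_gaussianReal m v m).div_const _),
    integral_const, integral_div, hvar]
  have : (v : ℝ) ≠ 0 := by exact_mod_cast hv
  simp only [probReal_univ, smul_eq_mul, one_mul]
  field_simp

lemma integrable_log_gaussianPDFReal (m : ℝ) {v : ℝ≥0} (hv : v ≠ 0) :
    Integrable (fun x => log (gaussianPDFReal m v x)) (gaussianReal m v) := by
  refine integrable_of_abs_le_sq_gaussianReal (A := |log √(2 * π * v)|) (B := 1 / (2 * v))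
    (c := m) (measurable_gaussianPDFReal m v).log.aestronglyMeasurable fun x => ?_
  rw [log_gaussianPDFReal hv, abs_le, div_mul_eq_mul_div, one_mul]
  have : 0 ≤ (x - m) ^ 2 / (2 * v) := by positivity
  constructor <;> nlinarith [le_abs_self (log √(2 * π * v)), neg_abs_le (log √(2 * π * v))]

noncomputable def gaussMix (ν : ℝ →₀ ℝ) (t : ℝ) : Measure ℝ :=
  ∑ q ∈ ν.support, ENNReal.ofReal (ν q) • gaussianReal (t * q) 1

noncomputable def mixDensity (ν : ℝ →₀ ℝ) (t x : ℝ) : ℝ :=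
  ∑ q ∈ ν.support, ν q * gaussianPDFReal (t * q) 1 x

noncomputable def gaussMixInfo (ν : ℝ →₀ ℝ) (t : ℝ) : ℝ :=
  ∑ q ∈ ν.support, ν q * (klDiv (gaussianReal (t * q) 1) (gaussMix ν t)).toReal

lemma measurable_mixDensity (ν : ℝ →₀ ℝ) (t : ℝ) : Measurable (mixDensity ν t) := by
  unfold mixDensity
  fun_prop

lemma mconv_discLaw (ν : ℝ →₀ ℝ) (t : ℝ) :
    mconv (discLaw ν t) (gaussianReal 0 1) = gaussMix ν t := by
  change (discLaw ν t) ∗ _ = _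
  simp only [discLaw, gaussMix, Measure.finsetSum_conv, Measure.conv_smul_left,
    Measure.dirac_conv, gaussianReal_map_const_add, zero_add]

lemma gaussMix_map_mul_conv (ν : ℝ →₀ ℝ) {ρ : ℝ} {w : ℝ≥0} (hρw : ρ ^ 2 + w = 1) (t : ℝ) :
    (gaussMix ν t).map (ρ * ·) ∗ gaussianReal 0 w = gaussMix ν (ρ * t) := by
  rw [gaussMix, Measure.map_finset_sum (by fun_prop), Measure.finsetSum_conv]
  simp only [Measure.map_smul, Measure.conv_smul_left, gaussianReal_map_mul_conv hρw, gaussMix,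
    mul_assoc]

instance isFiniteMeasure_gaussMix (ν : ℝ →₀ ℝ) (t : ℝ) : IsFiniteMeasure (gaussMix ν t) := by
  constructor
  simp [gaussMix, ENNReal.sum_lt_top]

lemma IsProbFinsuppR.support_nonempty {ν : ℝ →₀ ℝ} (hν : IsProbFinsuppR ν) :
    ν.support.Nonempty :=
  Finset.nonempty_of_sum_ne_zero (hν.2.trans_ne one_ne_zero)

lemma IsProbFinsuppR.pos_of_mem_support {ν : ℝ →₀ ℝ} (hν : IsProbFinsuppR ν) {q : ℝ}
    (hq : q ∈ ν.support) : 0 < ν q :=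
  (hν.1 q).lt_of_ne' (Finsupp.mem_support_iff.1 hq)

section

variable {ν : ℝ →₀ ℝ} (hν : IsProbFinsuppR ν) {t : ℝ}
include hν

lemma isProbabilityMeasure_gaussMix : IsProbabilityMeasure (gaussMix ν t) := by
  constructor
  simp [gaussMix, ← ENNReal.ofReal_sum_of_nonneg (fun q _ => hν.1 q), hν.2]

lemma gaussMix_eq_withDensity :
    gaussMix ν t = volume.withDensity fun x => ENNReal.ofReal (mixDensity ν t x) := by
  have hsum (x : ℝ) : ENNReal.ofReal (mixDensity ν t x)
      = ∑ q ∈ ν.support, ENNReal.ofReal (ν q) * ENNReal.ofReal (gaussianPDFReal (t * q) 1 x) := by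
    rw [mixDensity, ENNReal.ofReal_sum_of_nonneg fun q _ =>
      mul_nonneg (hν.1 q) (gaussianPDFReal_nonneg _ _ _)]
    simp_rw [ENNReal.ofReal_mul (hν.1 _)]
  ext s hs
  simp only [gaussMix, Measure.coe_finsetSum, Finset.sum_apply, Measure.smul_apply, smul_eq_mul,
    withDensity_apply _ hs, gaussianReal_apply _ one_ne_zero, gaussianPDF_def, hsum]
  rw [lintegral_finsetSum _ fun q _ => by fun_prop]
  exact Finset.sum_congr rfl fun q _ => (lintegral_const_mul _ (by fun_prop)).symm

lemma mul_gaussianPDFReal_le_mixDensity {q : ℝ} (hq : q ∈ ν.support) (x : ℝ) :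
    ν q * gaussianPDFReal (t * q) 1 x ≤ mixDensity ν t x :=
  Finset.single_le_sum (f := fun q => ν q * gaussianPDFReal (t * q) 1 x)
    (fun q _ => mul_nonneg (hν.1 q) (gaussianPDFReal_nonneg _ _ _)) hq

lemma mixDensity_pos (x : ℝ) : 0 < mixDensity ν t x := by
  obtain ⟨q, hq⟩ := hν.support_nonempty
  exact (mul_pos (hν.pos_of_mem_support hq) (gaussianPDFReal_pos _ _ _ one_ne_zero)).trans_le
    (mul_gaussianPDFReal_le_mixDensity hν (t := t) hq x)

lemma mixDensity_le (x : ℝ) : mixDensity ν t x ≤ (√(2 * π))⁻¹ := by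
  calc mixDensity ν t x ≤ ∑ q ∈ ν.support, ν q * (√(2 * π))⁻¹ := by
        refine Finset.sum_le_sum fun q _ => mul_le_mul_of_nonneg_left ?_ (hν.1 q)
        simpa using gaussianPDFReal_le (m := t * q) (v := 1) x
    _ = (√(2 * π))⁻¹ := by rw [← Finset.sum_mul, hν.2, one_mul]

lemma abs_log_mixDensity_le {q : ℝ} (hq : q ∈ ν.support) (x : ℝ) :
    |log (mixDensity ν t x)| ≤ log √(2 * π) - log (ν q) + (x - t * q) ^ 2 / 2 := by
  have hνq := hν.pos_of_mem_support hq
  have hlog2π : 0 ≤ log √(2 * π) :=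
    log_nonneg (one_le_sqrt.2 (by nlinarith [pi_gt_three]))
  have hlogνq : log (ν q) ≤ 0 :=
    log_nonpos hνq.le (hν.2 ▸ Finset.single_le_sum (fun q _ => hν.1 q) hq)
  have hlower : log (ν q) - log √(2 * π) - (x - t * q) ^ 2 / 2 ≤ log (mixDensity ν t x) := by
    have := log_le_log (mul_pos hνq (gaussianPDFReal_pos _ _ x one_ne_zero))
      (mul_gaussianPDFReal_le_mixDensity hν (t := t) hq x)
    rw [log_mul hνq.ne' (gaussianPDFReal_pos _ _ x one_ne_zero).ne',
      log_gaussianPDFReal one_ne_zero] at this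
    simpa [sub_eq_add_neg, add_assoc] using this
  have hupper : log (mixDensity ν t x) ≤ -log √(2 * π) := by
    rw [← log_inv]
    exact log_le_log (mixDensity_pos hν x) (mixDensity_le hν x)
  rw [abs_le]
  constructor <;> nlinarith [sq_nonneg (x - t * q)]

lemma integrable_log_mixDensity (m : ℝ) (v : ℝ≥0) :
    Integrable (fun x => log (mixDensity ν t x)) (gaussianReal m v) := by
  obtain ⟨q, hq⟩ := hν.support_nonempty
  refine integrable_of_abs_le_sq_gaussianReal (A := log √(2 * π) - log (ν q)) (B := 1 / 2)
    (c := t * q) (measurable_mixDensity ν t).log.aestronglyMeasurable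
    fun x => (abs_log_mixDensity_le hν hq x).trans_eq (by ring)

lemma gaussianReal_absolutelyContinuous_gaussMix (m : ℝ) :
    gaussianReal m 1 ≪ gaussMix ν t := by
  refine (gaussianReal_absolutelyContinuous m one_ne_zero).trans ?_
  rw [gaussMix_eq_withDensity hν]
  exact withDensity_absolutelyContinuous' (measurable_mixDensity ν t).ennreal_ofReal.aemeasurable
    (.of_forall fun x => ENNReal.ofReal_ne_zero_iff.2 (mixDensity_pos hν x))

lemma llr_gaussianReal_gaussMix (m : ℝ) :
    llr (gaussianReal m 1) (gaussMix ν t)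
      =ᵐ[gaussianReal m 1] fun x => log (gaussianPDFReal m 1 x) - log (mixDensity ν t x) := by
  refine (gaussianReal_absolutelyContinuous m one_ne_zero).ae_le ?_
  rw [gaussMix_eq_withDensity hν]
  filter_upwards [Measure.rnDeriv_withDensity_right (gaussianReal m 1) volume
      (f := fun x => ENNReal.ofReal (mixDensity ν t x))
      (measurable_mixDensity ν t).ennreal_ofReal.aemeasurable
      (.of_forall fun x => ENNReal.ofReal_ne_zero_iff.2 (mixDensity_pos hν x))
      (.of_forall fun x => ENNReal.ofReal_ne_top),
    rnDeriv_gaussianReal m 1] with x hx hγ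
  simp only [llr_def, hx, hγ, gaussianPDF_def, ENNReal.toReal_mul, ENNReal.toReal_inv,
    ENNReal.toReal_ofReal (mixDensity_pos hν x).le,
    ENNReal.toReal_ofReal (gaussianPDFReal_nonneg _ _ _)]
  rw [log_mul (inv_ne_zero (mixDensity_pos hν x).ne') (gaussianPDFReal_pos _ _ _ one_ne_zero).ne',
    log_inv]
  ring

lemma integrable_llr_gaussianReal_gaussMix (m : ℝ) :
    Integrable (llr (gaussianReal m 1) (gaussMix ν t)) (gaussianReal m 1) :=
  ((integrable_log_gaussianPDFReal m one_ne_zero).sub (integrable_log_mixDensity hν m 1)).congr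
    (llr_gaussianReal_gaussMix hν m).symm

lemma klDiv_gaussianReal_gaussMix_ne_top (m : ℝ) :
    klDiv (gaussianReal m 1) (gaussMix ν t) ≠ ∞ :=
  klDiv_ne_top (gaussianReal_absolutelyContinuous_gaussMix hν m)
    (integrable_llr_gaussianReal_gaussMix hν m)

lemma toReal_klDiv_gaussianReal_gaussMix (m : ℝ) :
    (klDiv (gaussianReal m 1) (gaussMix ν t)).toReal
      = -log √(2 * π) - 1 / 2 - ∫ x, log (mixDensity ν t x) ∂gaussianReal m 1 := by
  have := isProbabilityMeasure_gaussMix hν (t := t)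
  rw [toReal_klDiv_of_measure_eq (gaussianReal_absolutelyContinuous_gaussMix hν m) (by simp),
    integral_congr_ae (llr_gaussianReal_gaussMix hν m),
    integral_sub (integrable_log_gaussianPDFReal m one_ne_zero) (integrable_log_mixDensity hν m 1),
    integral_log_gaussianPDFReal one_ne_zero]
  simp

lemma toReal_klDiv_gaussianReal_gaussMix_le {q : ℝ} (hq : q ∈ ν.support) :
    (klDiv (gaussianReal (t * q) 1) (gaussMix ν t)).toReal ≤ -log (ν q) := by
  have hνq := hν.pos_of_mem_support hq
  rw [toReal_klDiv_of_measure_eq (gaussianReal_absolutelyContinuous_gaussMix hν _)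
      (by simp [(isProbabilityMeasure_gaussMix hν).measure_univ])]
  calc ∫ x, llr (gaussianReal (t * q) 1) (gaussMix ν t) x ∂gaussianReal (t * q) 1
      ≤ ∫ _, -log (ν q) ∂gaussianReal (t * q) 1 :=
        integral_mono_ae (integrable_llr_gaussianReal_gaussMix hν _) (integrable_const _) ?_
    _ = -log (ν q) := by simp
  filter_upwards [llr_gaussianReal_gaussMix hν (t * q)] with x hx
  have hγ := gaussianPDFReal_pos (t * q) 1 x one_ne_zero
  have := log_le_log (mul_pos hνq hγ) (mul_gaussianPDFReal_le_mixDensity hν hq x)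
  rw [log_mul hνq.ne' hγ.ne'] at this
  rw [hx]
  linarith

end

section

variable {ν : ℝ →₀ ℝ} (hν : IsProbFinsuppR ν)
include hν

lemma integral_log_mixDensity_gaussMix (t : ℝ) :
    ∫ x, log (mixDensity ν t x) ∂gaussMix ν t = -log √(2 * π) - 1 / 2 - gaussMixInfo ν t := by
  have hint (q : ℝ) (_ : q ∈ ν.support) : Integrable (fun x => log (mixDensity ν t x))
      (ENNReal.ofReal (ν q) • gaussianReal (t * q) 1) :=
    (integrable_log_mixDensity hν _ _).smul_measure ENNReal.ofReal_ne_top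
  have hterm (q : ℝ) : ∫ x, log (mixDensity ν t x) ∂gaussianReal (t * q) 1
      = -log √(2 * π) - 1 / 2 - (klDiv (gaussianReal (t * q) 1) (gaussMix ν t)).toReal := by
    rw [toReal_klDiv_gaussianReal_gaussMix hν]
    ring
  rw [gaussMix, integral_finsetSum_measure hint, gaussMixInfo]
  simp only [integral_smul_measure, ENNReal.toReal_ofReal (hν.1 _), hterm, smul_eq_mul, mul_sub,
    Finset.sum_sub_distrib, ← Finset.sum_mul, hν.2, one_mul]

lemma smoothEnt_eq (t : ℝ) :
    smoothEnt ν t = (log √(2 * π) + 1 / 2 + gaussMixInfo ν t) / log 2 := by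
  have hac : gaussMix ν t ≪ volume := by
    rw [gaussMix_eq_withDensity hν]
    exact withDensity_absolutelyContinuous _ _
  have hdensity : (fun x => logb 2 ((gaussMix ν t).rnDeriv volume x).toReal)
      =ᵐ[gaussMix ν t] fun x => log (mixDensity ν t x) / log 2 := by
    refine hac.ae_le ?_
    rw [gaussMix_eq_withDensity hν]
    filter_upwards [Measure.rnDeriv_withDensity volume (measurable_mixDensity ν t).ennreal_ofReal]
      with x hx
    rw [hx, ENNReal.toReal_ofReal (mixDensity_pos hν x).le, logb]
  rw [smoothEnt, mconv_discLaw, diffEnt_eq_neg_integral_logb_rnDeriv hac,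
    integral_congr_ae hdensity, integral_div, integral_log_mixDensity_gaussMix hν]
  ring

lemma gaussMixInfo_nonneg (t : ℝ) : 0 ≤ gaussMixInfo ν t :=
  Finset.sum_nonneg fun q _ => mul_nonneg (hν.1 q) ENNReal.toReal_nonneg

lemma gaussMixInfo_le (t : ℝ) : gaussMixInfo ν t ≤ ∑ q ∈ ν.support, negMulLog (ν q) := by
  refine Finset.sum_le_sum fun q hq => ?_
  rw [negMulLog, neg_mul, ← mul_neg]
  exact mul_le_mul_of_nonneg_left (toReal_klDiv_gaussianReal_gaussMix_le hν hq) (hν.1 q)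

lemma gaussMixInfo_mono {s t : ℝ} (hst : |s| ≤ |t|) : gaussMixInfo ν s ≤ gaussMixInfo ν t := by
  set ρ := s / t
  have hρ : ρ ^ 2 ≤ 1 := by
    rw [div_pow]
    exact div_le_one_of_le₀ (sq_le_sq.2 hst) (sq_nonneg t)
  have hρt : ρ * t = s := by
    rcases eq_or_ne t 0 with rfl | ht
    · simp only [abs_zero, abs_nonpos_iff] at hst
      simp [hst]
    · exact div_mul_cancel₀ s ht
  let w : ℝ≥0 := ⟨1 - ρ ^ 2, sub_nonneg.2 hρ⟩
  have hρw : ρ ^ 2 + w = 1 := add_sub_cancel _ _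
  refine Finset.sum_le_sum fun q hq => mul_le_mul_of_nonneg_left ?_ (hν.1 q)
  refine ENNReal.toReal_mono (klDiv_gaussianReal_gaussMix_ne_top hν _) ?_
  calc klDiv (gaussianReal (s * q) 1) (gaussMix ν s)
      = klDiv ((gaussianReal (t * q) 1).map (ρ * ·) ∗ gaussianReal 0 w)
          ((gaussMix ν t).map (ρ * ·) ∗ gaussianReal 0 w) := by
        rw [gaussianReal_map_mul_conv hρw, gaussMix_map_mul_conv ν hρw, ← mul_assoc, hρt]
    _ ≤ klDiv ((gaussianReal (t * q) 1).map (ρ * ·)) ((gaussMix ν t).map (ρ * ·)) :=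
        klDiv_conv_le _ _ _
    _ ≤ klDiv (gaussianReal (t * q) 1) (gaussMix ν t) := klDiv_map_le _ _ (by fun_prop)

lemma smoothEnt_monotoneOn : MonotoneOn (smoothEnt ν) (Set.Ici 0) := by
  intro s hs t _ hst
  rw [smoothEnt_eq hν, smoothEnt_eq hν]
  gcongr
  exact gaussMixInfo_mono hν (by rwa [abs_of_nonneg hs, abs_of_nonneg (hs.trans hst)])

lemma smoothEnt_sub_smoothEnt_le (s t : ℝ) :
    smoothEnt ν t - smoothEnt ν s ≤ (∑ q ∈ ν.support, negMulLog (ν q)) / log 2 := by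
  rw [smoothEnt_eq hν, smoothEnt_eq hν, ← sub_div]
  gcongr
  linarith [gaussMixInfo_le hν t, gaussMixInfo_nonneg hν s]

lemma le_Phi {a t : ℝ} (ht : 0 < t) : smoothEnt ν (t * a) - smoothEnt ν t ≤ Phi ν a := by
  refine le_csSup ⟨(∑ q ∈ ν.support, negMulLog (ν q)) / log 2, ?_⟩ ⟨t, ht, rfl⟩
  rintro _ ⟨s, -, rfl⟩
  exact smoothEnt_sub_smoothEnt_le hν _ _

lemma Phi_nonneg {a : ℝ} (ha : 1 ≤ a) : 0 ≤ Phi ν a := by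
  have hle := le_Phi hν (a := a) one_pos
  rw [one_mul] at hle
  linarith [smoothEnt_monotoneOn hν (Set.mem_Ici.2 zero_le_one)
    (Set.mem_Ici.2 (zero_le_one.trans ha)) ha]

lemma Phi_mul_le {a b : ℝ} (hb : 0 < b) : Phi ν (a * b) ≤ Phi ν a + Phi ν b := by
  refine csSup_le ⟨_, 1, one_pos, rfl⟩ ?_
  rintro _ ⟨t, ht, rfl⟩
  have := le_Phi hν (a := a) (mul_pos ht hb)
  have := le_Phi hν (a := b) ht
  rw [show t * (a * b) = t * b * a by ring]
  linarith

lemma Phi_monotoneOn : MonotoneOn (Phi ν) (Set.Ici 1) := by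
  intro b hb a _ hba
  refine csSup_le ⟨_, 1, one_pos, rfl⟩ ?_
  rintro _ ⟨t, ht, rfl⟩
  have := smoothEnt_monotoneOn hν (mul_pos ht (zero_lt_one.trans_le hb)).le
    (mul_pos ht (zero_lt_one.trans_le (le_trans hb hba))).le (mul_le_mul_of_nonneg_left hba ht.le)
  linarith [le_Phi hν (a := a) ht]

end

lemma apply_pow_succ_le_of_mul_le {Φ : ℝ → ℝ}
    (hmul : ∀ a b, 0 < a → 0 < b → Φ (a * b) ≤ Φ a + Φ b) {a : ℝ} (ha : 0 < a) (n : ℕ) :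
    Φ (a ^ (n + 1)) ≤ (n + 1) * Φ a := by
  induction n with
  | zero => simp
  | succ n ih =>
    rw [pow_succ]
    push_cast
    linarith [hmul _ _ (pow_pos ha (n + 1)) ha]

lemma exists_pow_succ_mem_Icc_sqrt_two {a : ℝ} (ha : 1 < a) (ha2 : a ≤ 2) :
    ∃ n : ℕ, a ^ (n + 1) ∈ Set.Icc √2 2 := by
  classical
  have hex : ∃ n : ℕ, √2 ≤ a ^ (n + 1) := by
    obtain ⟨n, hn⟩ := pow_unbounded_of_one_lt √2 ha
    exact ⟨n, hn.le.trans (pow_le_pow_right₀ ha.le n.le_succ)⟩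
  refine ⟨Nat.find hex, Nat.find_spec hex, ?_⟩
  rcases hfind : Nat.find hex with _ | n
  · simpa using ha2
  · have hlt : a ^ (n + 1) < √2 := not_le.1 (Nat.find_min hex (by omega))
    have ha' : a < √2 := (le_self_pow₀ ha.le n.succ_ne_zero).trans_lt hlt
    calc a ^ (n + 1 + 1) = a ^ (n + 1) * a := pow_succ _ _
      _ ≤ √2 * √2 := mul_le_mul hlt.le ha'.le (by positivity) (by positivity)
      _ = 2 := mul_self_sqrt zero_le_two

lemma mul_min_logb_le_of_mul_le {Φ : ℝ → ℝ} {c : ℝ}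
    (hmul : ∀ a b, 0 < a → 0 < b → Φ (a * b) ≤ Φ a + Φ b) (hmono : MonotoneOn Φ (Set.Ici 1))
    (hc : ∀ x ∈ Set.Icc √2 2, c * logb 2 x ≤ Φ x) {a : ℝ} (ha : 1 < a) :
    c * min (logb 2 a) 1 ≤ Φ a := by
  rcases le_or_gt a 2 with ha2 | ha2
  · rw [min_eq_left ((logb_le_logb_of_le one_lt_two (by linarith) ha2).trans_eq
      (logb_self_eq_one one_lt_two))]
    obtain ⟨n, hn⟩ := exists_pow_succ_mem_Icc_sqrt_two ha ha2
    have := (hc _ hn).trans (apply_pow_succ_le_of_mul_le hmul (by linarith) n)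
    rw [logb_pow] at this
    push_cast at this
    nlinarith
  · rw [min_eq_right ((logb_self_eq_one one_lt_two).symm.trans_le
      (logb_le_logb_of_le one_lt_two two_pos ha2.le)), mul_one]
    calc c = c * logb 2 2 := by rw [logb_self_eq_one one_lt_two, mul_one]
      _ ≤ Φ 2 := hc 2 ⟨sqrt_le_iff.2 ⟨zero_le_two, by norm_num⟩, le_rfl⟩
      _ ≤ Φ a := hmono (Set.mem_Ici.2 one_le_two) (Set.mem_Ici.2 (by linarith)) ha2.le

/-- With `c = inf_{√2 ≤ a ≤ 2} Φ_ν(a)/log₂ a`, one has `Φ_ν(a) ≥ c·min{log₂ a, 1}` for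
all `a > 1`. -/
theorem stmt13 (ν : ℝ →₀ ℝ) (hν : IsProbFinsuppR ν) (c : ℝ)
    (hc : c = sInf ((fun a => Phi ν a / Real.logb 2 a) '' Set.Icc (Real.sqrt 2) 2)) :
    ∀ a : ℝ, 1 < a → c * min (Real.logb 2 a) 1 ≤ Phi ν a := by
  refine fun a ha => mul_min_logb_le_of_mul_le (fun _ _ _ hb => Phi_mul_le hν hb)
    (Phi_monotoneOn hν) (fun x hx => ?_) ha
  have hbdd : BddBelow ((fun a => Phi ν a / logb 2 a) '' Set.Icc √2 2) := by
    refine ⟨0, ?_⟩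
    rintro _ ⟨y, hy, rfl⟩
    have hy1 := one_lt_sqrt_two.trans_le hy.1
    exact div_nonneg (Phi_nonneg hν hy1.le) (logb_pos one_lt_two hy1).le
  rw [← le_div_iff₀ (logb_pos one_lt_two (one_lt_sqrt_two.trans_le hx.1)), hc]
  exact csInf_le hbdd ⟨x, hx, rfl⟩
end

section
/- Let Γ be a subgroup of Upp_d(ℂ), the group of invertible upper-triangular d×d complex matrices. If Γ is not virtually nilpotent, then there is a group homomorphism ρ : Γ → Aff(ℂ) whose image ρ(Γ) is not virtually nilpotent. -/
/-- A group is virtually nilpotent if it has a nilpotent subgroup of finite index. -/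
def IsVirtuallyNilpotent (G : Type*) [Group G] : Prop :=
  ∃ H : Subgroup G, Group.IsNilpotent H ∧ H.FiniteIndex

/-!
Write `χᵢ` for the diagonal characters of `Γ`. Conjugating `Γ` by a suitable upper-triangular
matrix `P`, every entry `(i, j)` for which `χᵢ / χⱼ` has infinite image can be made to vanish
identically, pair by pair in order of increasing width `j - i`. Once all narrower such entries
vanish, `γ ↦ (x ↦ (χᵢ / χⱼ)(γ) x + (PγP⁻¹)ᵢⱼ / γⱼⱼ)` is a homomorphism `Γ → Aff`, namely the action
of `PγP⁻¹` on the plane spanned by `eᵢ, eⱼ`, read in the affine chart. If its image is virtually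
nilpotent while having infinitely many slopes, it has a common fixed point `x`: a nilpotent group
cannot contain both a nontrivial translation and a map of slope `c ≠ 1`, because the iterated
commutators of the two are the translations scaled by `(c - 1)ⁿ`. Conjugating by the transvection
`1 - x Eᵢⱼ` then kills the entry. Finally, on the finite-index subgroup where the characters
`χᵢ / χⱼ` with finite image are trivial, `PγP⁻¹` only has entries at pairs with finite ratio, and
taking commutators pushes `PγP⁻¹ - 1` strictly further above the diagonal, so this subgroup is
nilpotent.
-/

open scoped commutatorElement

namespace Subgroup

variable {G : Type*} [Group G]

lemma commutatorElement_mem (H : Subgroup G) {a b : G} (ha : a ∈ H) (hb : b ∈ H) :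
    ⁅a, b⁆ ∈ H := by
  rw [commutatorElement_def]
  exact mul_mem (mul_mem (mul_mem ha hb) (inv_mem ha)) (inv_mem hb)

theorem iterate_commutator_mem_lowerCentralSeries (a b : G) (n : ℕ) :
    (⁅a, ·⁆)^[n] b ∈ (⊤ : Subgroup G).lowerCentralSeries n := by
  induction n with
  | zero => exact mem_top b
  | succ n ih =>
    rw [Function.iterate_succ_apply', lowerCentralSeries_succ, commutator_comm]
    exact commutator_mem_commutator (mem_top a) ih

end Subgroup

theorem Group.IsNilpotent.exists_iterate_commutator_eq_one (G : Type*) [Group G]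
    [Group.IsNilpotent G] : ∃ n, ∀ a b : G, (⁅a, ·⁆)^[n] b = 1 := by
  obtain ⟨n, hn⟩ := Subgroup.nilpotent_iff_lowerCentralSeries.mp ‹_›
  refine ⟨n, fun a b => ?_⟩
  simpa [hn] using Subgroup.iterate_commutator_mem_lowerCentralSeries a b n

namespace AffineEquiv

variable {K : Type*} [Field K]

lemma linear_apply_eq_mul (e : K ≃ᵃ[K] K) (x : K) : e.linear x = x * e.linear 1 := by
  simpa using e.linear.map_smul x 1

noncomputable def slopeHom : (K ≃ᵃ[K] K) →* Kˣ where
  toFun e := Units.mk0 (e.linear 1) (by simp)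
  map_one' := by ext; rfl
  map_mul' e f := by
    ext
    change e.linear (f.linear 1) = e.linear 1 * f.linear 1
    rw [linear_apply_eq_mul, mul_comm]

lemma apply_eq_slopeHom_mul_add (e : K ≃ᵃ[K] K) (x : K) : e x = slopeHom e * x + e 0 := by
  have h := e.toAffineMap.linearMap_vsub x 0
  simp only [vsub_eq_sub, sub_zero, linear_toAffineMap, coe_toAffineMap, LinearEquiv.coe_coe] at h
  rw [← sub_eq_iff_eq_add, ← h, e.linear_apply_eq_mul, mul_comm]
  rfl

lemma eq_constVAdd_of_slopeHom_eq_one {e : K ≃ᵃ[K] K} (he : slopeHom e = 1) :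
    e = constVAdd K K (e 0) := by
  ext x
  rw [apply_eq_slopeHom_mul_add, he]
  simp [add_comm]

lemma conj_constVAdd (p : K ≃ᵃ[K] K) (t : K) :
    p * constVAdd K K t * p⁻¹ = constVAdd K K (slopeHom p * t) := by
  rw [mul_inv_eq_iff_eq_mul]
  ext z
  change p (t + z) = slopeHom p * t + p z
  rw [apply_eq_slopeHom_mul_add p, apply_eq_slopeHom_mul_add p z]
  ring

lemma commutator_constVAdd (p : K ≃ᵃ[K] K) (t : K) :
    ⁅p, constVAdd K K t⁆ = constVAdd K K ((slopeHom p - 1) * t) := by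
  rw [commutatorElement_def, conj_constVAdd, inv_def, constVAdd_symm]
  ext x
  change slopeHom p * t + (-t + x) = (slopeHom p - 1) * t + x
  ring

lemma iterate_commutator_constVAdd (p : K ≃ᵃ[K] K) (t : K) (n : ℕ) :
    (⁅p, ·⁆)^[n] (constVAdd K K t) = constVAdd K K ((slopeHom p - 1) ^ n * t) := by
  induction n with
  | zero => simp
  | succ n ih =>
    rw [Function.iterate_succ_apply', ih, commutator_constVAdd, pow_succ, mul_assoc, mul_left_comm]

lemma slopeHom_commutator (p q : K ≃ᵃ[K] K) : slopeHom ⁅p, q⁆ = 1 := by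
  rw [map_commutatorElement, commutatorElement_eq_one_iff_mul_comm, mul_comm]

theorem finite_image_slopeHom_of_le_ker {H : Subgroup (K ≃ᵃ[K] K)} {N : Subgroup H}
    [N.FiniteIndex] (hN : N ≤ (slopeHom.comp H.subtype).ker) :
    (slopeHom '' (H : Set (K ≃ᵃ[K] K))).Finite := by
  set ψ := slopeHom.comp H.subtype
  have : ψ.ker.FiniteIndex := Subgroup.finiteIndex_of_le hN
  have : Finite ψ.range := Finite.of_equiv _ (QuotientGroup.quotientKerEquivRange ψ).toEquiv
  convert Set.toFinite (ψ.range : Set Kˣ)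
  ext; simp [ψ]

noncomputable def homOfCocycle {G : Type*} [Group G] (χ : G →* Kˣ) (b : G → K)
    (hb : ∀ g h, b (g * h) = χ g * b h + b g) : G →* (K ≃ᵃ[K] K) where
  toFun g := (LinearEquiv.smulOfUnit (χ g)).toAffineEquiv.trans (constVAdd K K (b g))
  map_one' := by
    have : b 1 = 0 := by simpa using hb 1 1
    ext x
    change b 1 + (χ 1 : K) * x = x
    simp [this]
  map_mul' g h := by
    ext x
    change b (g * h) + (χ (g * h) : K) * x = b g + χ g * (b h + χ h * x)
    rw [hb, map_mul, Units.val_mul]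
    ring

lemma homOfCocycle_apply {G : Type*} [Group G] (χ : G →* Kˣ) (b : G → K)
    (hb : ∀ g h, b (g * h) = χ g * b h + b g) (g : G) (x : K) :
    homOfCocycle χ b hb g x = χ g * x + b g :=
  add_comm _ _

lemma slopeHom_homOfCocycle {G : Type*} [Group G] (χ : G →* Kˣ) (b : G → K)
    (hb : ∀ g h, b (g * h) = χ g * b h + b g) (g : G) : slopeHom (homOfCocycle χ b hb g) = χ g := by
  ext
  simpa [homOfCocycle_apply] using (apply_eq_slopeHom_mul_add (homOfCocycle χ b hb g) 1).symm

variable [CharZero K]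

theorem eq_one_of_slopeHom_eq_one {H : Subgroup (K ≃ᵃ[K] K)} (hH : IsVirtuallyNilpotent H)
    (hinf : (slopeHom '' (H : Set (K ≃ᵃ[K] K))).Infinite) {τ : K ≃ᵃ[K] K} (hτH : τ ∈ H)
    (hτ : slopeHom τ = 1) : τ = 1 := by
  obtain ⟨N, hN, hNfin⟩ := hH
  obtain ⟨a, ha, hslope⟩ : ∃ a ∈ N, slopeHom (a : K ≃ᵃ[K] K) ≠ 1 := by
    by_contra! h
    exact hinf (finite_image_slopeHom_of_le_ker h)
  obtain ⟨m, hm, -, hmN⟩ := N.exists_pow_mem_of_index_ne_zero hNfin.index_ne_zero ⟨τ, hτH⟩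
  obtain ⟨n, hn⟩ := Group.IsNilpotent.exists_iterate_commutator_eq_one N
  set φ : N →* K ≃ᵃ[K] K := H.subtype.comp N.subtype
  have hτm : φ ⟨_, hmN⟩ = constVAdd K K ((m : K) * τ 0) := by
    rw [← nsmul_eq_mul, constVAdd_nsmul, ← eq_constVAdd_of_slopeHom_eq_one hτ]
    rfl
  have htrivial : constVAdd K K ((slopeHom (φ ⟨a, ha⟩) - 1) ^ n * ((m : K) * τ 0)) = 1 := by
    rw [← iterate_commutator_constVAdd, ← hτm,
      ← Function.Semiconj.iterate_right (f := φ) (map_commutatorElement φ ⟨a, ha⟩) n, hn,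
      map_one]
  have hc : (slopeHom (φ ⟨a, ha⟩) : K) - 1 ≠ 0 := sub_ne_zero.2 fun h => hslope (Units.ext h)
  have hτ0 : τ 0 = 0 := by
    simpa [hc, hm.ne'] using congrArg (fun e : K ≃ᵃ[K] K => e 0) htrivial
  rw [eq_constVAdd_of_slopeHom_eq_one hτ, hτ0, constVAdd_zero]
  rfl

theorem exists_fixed_point_of_isVirtuallyNilpotent {H : Subgroup (K ≃ᵃ[K] K)}
    (hH : IsVirtuallyNilpotent H) (hinf : (slopeHom '' (H : Set (K ≃ᵃ[K] K))).Infinite) :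
    ∃ x, ∀ h ∈ H, h x = x := by
  obtain ⟨g, hgH, hg⟩ : ∃ g ∈ H, slopeHom g ≠ 1 := by
    by_contra! h
    exact hinf ((Set.finite_singleton 1).subset (by rintro _ ⟨g, hg, rfl⟩; exact h g hg))
  have hc : (1 : K) - slopeHom g ≠ 0 := sub_ne_zero.2 fun h => hg (Units.ext h.symm)
  have fixed_iff (x : K) : g x = x ↔ x = g 0 / (1 - slopeHom g) := by
    rw [apply_eq_slopeHom_mul_add, eq_div_iff hc]
    constructor <;> intro h <;> linear_combination -h
  refine ⟨g 0 / (1 - slopeHom g), fun h hh => ?_⟩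
  have hcomm : h * g = g * h := commutatorElement_eq_one_iff_mul_comm.mp <|
    eq_one_of_slopeHom_eq_one hH hinf (H.commutatorElement_mem hh hgH) (slopeHom_commutator h g)
  rw [← fixed_iff]
  change (g * h) _ = h _
  rw [← hcomm]
  exact congrArg h ((fixed_iff _).2 rfl)

end AffineEquiv

namespace Matrix

section UpperTriangular

variable {n R : Type*} [Fintype n] [LinearOrder n] [CommRing R]

lemma IsUpperTriangular.mul_apply_self {A B : Matrix n n R} (hA : A.IsUpperTriangular)
    (hB : B.IsUpperTriangular) (i : n) : (A * B) i i = A i i * B i i := by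
  rw [mul_apply, Finset.sum_eq_single i]
  · intro l _ hl
    rcases hl.lt_or_gt with h | h
    · rw [hA h, zero_mul]
    · rw [hB h, mul_zero]
  · simp

lemma IsUpperTriangular.mul_apply_of_forall_between {A B : Matrix n n R}
    (hA : A.IsUpperTriangular) (hB : B.IsUpperTriangular) {i j : n} (hij : i < j)
    (hcut : ∀ l, i < l → l < j → A i l = 0 ∨ B l j = 0) :
    (A * B) i j = A i i * B i j + A i j * B j j := by
  rw [mul_apply, ← Finset.sum_pair (f := fun l => A i l * B l j) hij.ne]
  refine (Finset.sum_subset (Finset.subset_univ _) fun l _ hl => ?_).symm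
  simp only [Finset.mem_insert, Finset.mem_singleton, not_or] at hl
  rcases lt_or_gt_of_ne hl.1 with hli | hil
  · rw [hA hli, zero_mul]
  rcases lt_or_gt_of_ne hl.2 with hlj | hjl
  · rcases hcut l hil hlj with h | h <;> simp [h]
  · rw [hB hjl, mul_zero]

variable [DecidableEq n]

lemma IsUpperTriangular.transvection_conj_apply_same {M : Matrix n n R}
    (hM : M.IsUpperTriangular) {i j : n} (hij : i < j) (c : R) :
    (transvection i j c * M * transvection i j (-c)) i j = M i j + c * M j j - c * M i i := by
  rw [mul_transvection_apply_same, transvection_mul_apply_same, transvection_mul_apply_same,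
    hM hij]
  ring

lemma IsUpperTriangular.transvection_conj_apply_other {M : Matrix n n R}
    (hM : M.IsUpperTriangular) {i j r s : n} (hr : r = i → s < j) (hs : s = j → i < r) (c : R) :
    (transvection i j c * M * transvection i j (-c)) r s = M r s := by
  by_cases hsj : s = j
  · subst hsj
    have hir := hs rfl
    rw [mul_transvection_apply_same, transvection_mul_apply_of_ne i s r s hir.ne',
      transvection_mul_apply_of_ne i s r i hir.ne', hM hir, mul_zero, add_zero]
  · rw [mul_transvection_apply_of_ne i j r s hsj]
    by_cases hri : r = i
    · subst hri
      rw [transvection_mul_apply_same, hM (hr rfl), mul_zero, add_zero]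
    · rw [transvection_mul_apply_of_ne i j r s hri]

namespace GeneralLinearGroup

variable (n R) in
def upperTriangular : Subgroup (GL n R) where
  carrier := {g | (g : Matrix n n R).IsUpperTriangular}
  one_mem' := blockTriangular_one
  mul_mem' hg hh := BlockTriangular.mul hg hh
  inv_mem' {g} hg := by
    change ((g⁻¹ : GL n R) : Matrix n n R).IsUpperTriangular
    rw [coe_units_inv]
    exact blockTriangular_inv_of_blockTriangular hg

def transvection {i j : n} (hij : i ≠ j) (c : R) : GL n R :=
  ⟨Matrix.transvection i j c, Matrix.transvection i j (-c),
    by rw [transvection_mul_transvection_same i j hij, add_neg_cancel, transvection_zero],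
    by rw [transvection_mul_transvection_same i j hij, neg_add_cancel, transvection_zero]⟩

lemma transvection_mem_upperTriangular {i j : n} (hij : i < j) (c : R) :
    transvection hij.ne c ∈ upperTriangular n R := by
  intro r s (hsr : s < r)
  have : ¬(i = r ∧ j = s) := by rintro ⟨rfl, rfl⟩; exact hsr.not_gt hij
  simp [transvection, Matrix.transvection, one_apply_ne hsr.ne', this]

lemma diag_mul_diag_inv {g : GL n R} (hg : g ∈ upperTriangular n R) (i : n) :
    g i i * g⁻¹ i i = 1 := by
  rw [← IsUpperTriangular.mul_apply_self hg (inv_mem hg), ← Units.val_mul, mul_inv_cancel]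
  exact one_apply_eq i

lemma diag_ne_zero [Nontrivial R] {g : GL n R} (hg : g ∈ upperTriangular n R) (i : n) :
    g i i ≠ 0 :=
  left_ne_zero_of_mul_eq_one (diag_mul_diag_inv hg i)

def diagUnit (i : n) : upperTriangular n R →* Rˣ where
  toFun g := ⟨(g : GL n R) i i, (g⁻¹ : GL n R) i i, diag_mul_diag_inv g.2 i,
    by rw [mul_comm]; exact diag_mul_diag_inv g.2 i⟩
  map_one' := by ext; exact one_apply_eq i
  map_mul' g h := by ext; exact IsUpperTriangular.mul_apply_self g.2 h.2 i

lemma conj_apply_self {P g : GL n R} (hP : P ∈ upperTriangular n R)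
    (hg : g ∈ upperTriangular n R) (i : n) : (P * g * P⁻¹) i i = g i i := by
  rw [Units.val_mul, IsUpperTriangular.mul_apply_self (mul_mem hP hg) (inv_mem hP), Units.val_mul,
    IsUpperTriangular.mul_apply_self hP hg]
  linear_combination g i i * diag_mul_diag_inv hP i

end GeneralLinearGroup

end UpperTriangular

section SupportedAbove

variable {R : Type*} [CommRing R] {d : ℕ} (rel : Fin d → Fin d → Prop)

def SupportedAbove (k : ℕ) (A : Matrix (Fin d) (Fin d) R) : Prop :=
  ∀ r s, A r s ≠ 0 → rel r s ∧ (r : ℕ) + k ≤ s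

namespace SupportedAbove

variable {rel} {k m : ℕ} {A B : Matrix (Fin d) (Fin d) R}

lemma zero : SupportedAbove rel k (0 : Matrix (Fin d) (Fin d) R) :=
  fun _ _ h => absurd rfl h

lemma one [Std.Refl rel] : SupportedAbove rel 0 (1 : Matrix (Fin d) (Fin d) R) := by
  intro r s h
  obtain rfl : r = s := by by_contra hrs; exact h (one_apply_ne hrs)
  exact ⟨refl_of rel r, le_refl _⟩

lemma add (hA : SupportedAbove rel k A) (hB : SupportedAbove rel k B) :
    SupportedAbove rel k (A + B) := by
  intro r s h
  by_cases hA0 : A r s = 0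
  · exact hB r s (by simpa [hA0] using h)
  · exact hA r s hA0

lemma neg (hA : SupportedAbove rel k A) : SupportedAbove rel k (-A) :=
  fun r s h => hA r s (by simpa using h)

lemma sub (hA : SupportedAbove rel k A) (hB : SupportedAbove rel k B) :
    SupportedAbove rel k (A - B) := by
  simpa [sub_eq_add_neg] using hA.add hB.neg

lemma mul [IsTrans (Fin d) rel] (hA : SupportedAbove rel k A) (hB : SupportedAbove rel m B) :
    SupportedAbove rel (k + m) (A * B) := by
  intro r s h
  rw [mul_apply] at h
  obtain ⟨l, -, hl⟩ := Finset.exists_ne_zero_of_sum_ne_zero h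
  obtain ⟨hrl, hkl⟩ := hA r l (left_ne_zero_of_mul hl)
  obtain ⟨hls, hms⟩ := hB l s (right_ne_zero_of_mul hl)
  exact ⟨trans_of rel hrl hls, by omega⟩

lemma eq_zero (hA : SupportedAbove rel d A) : A = 0 := by
  ext r s
  by_contra h
  have := (hA r s h).2
  omega

end SupportedAbove

namespace GeneralLinearGroup

variable [Std.Refl rel] [IsTrans (Fin d) rel]

-- The condition on `g⁻¹` is what makes this set closed under inversion.
def bandSubgroup (k : ℕ) : Subgroup (GL (Fin d) R) where
  carrier := {g | SupportedAbove rel 0 (g : Matrix (Fin d) (Fin d) R) ∧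
    SupportedAbove rel 0 ((g⁻¹ : GL (Fin d) R) : Matrix (Fin d) (Fin d) R) ∧
    SupportedAbove rel k ((g : Matrix (Fin d) (Fin d) R) - 1)}
  one_mem' := ⟨.one, .one, by simpa using .zero⟩
  mul_mem' {g h} := by
    rintro ⟨hg, hg', hg1⟩ ⟨hh, hh', hh1⟩
    refine ⟨hg.mul hh, by simpa using hh'.mul hg', ?_⟩
    have : ((g * h : GL (Fin d) R) : Matrix (Fin d) (Fin d) R) - 1 = (g - 1) * h + (h - 1) := by
      simp [sub_mul]
    rw [this]
    simpa using (hg1.mul hh).add hh1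
  inv_mem' {g} := by
    rintro ⟨hg, hg', hg1⟩
    refine ⟨hg', by simpa using hg, ?_⟩
    have : ((g⁻¹ : GL (Fin d) R) : Matrix (Fin d) (Fin d) R) - 1 = -(g⁻¹ * (g - 1)) := by
      simp [mul_sub]
    rw [this]
    simpa using (hg'.mul hg1).neg

lemma commutator_mem_bandSubgroup_succ {k : ℕ} {g h : GL (Fin d) R}
    (hg : g ∈ bandSubgroup (R := R) rel k) (hh : h ∈ bandSubgroup (R := R) rel 0)
    (hdiag : ∀ r s, rel r s → h r r = h s s) : ⁅g, h⁆ ∈ bandSubgroup (R := R) rel (k + 1) := by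
  obtain ⟨hg, hg', hA⟩ := hg
  obtain ⟨hh, hh', -⟩ := hh
  set A : Matrix (Fin d) (Fin d) R := g - 1
  set D : Matrix (Fin d) (Fin d) R := diagonal fun r => h r r
  set B : Matrix (Fin d) (Fin d) R := h - D
  have hB : SupportedAbove rel 1 B := by
    intro r s hrs
    obtain rfl | hne := eq_or_ne r s
    · simp [B, D] at hrs
    · have := hh r s (by simpa [B, D, hne] using hrs)
      exact ⟨this.1, by have := Fin.val_ne_of_ne hne; omega⟩
  -- `D` is constant along `rel`, which is where `A` lives.
  have hAD : A * D = D * A := by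
    ext r s
    simp only [D, mul_diagonal, diagonal_mul]
    by_cases hrs : A r s = 0
    · simp [hrs]
    · rw [hdiag r s (hA r s hrs).1, mul_comm]
  have hcomm : (⁅g, h⁆ : GL (Fin d) R) - (1 : Matrix (Fin d) (Fin d) R) =
      (A * B - B * A) * ((g⁻¹ : GL (Fin d) R) * (h⁻¹ : GL (Fin d) R)) := by
    have hAB : A * B - B * A = g * h - h * g := by
      simp only [B, mul_sub, sub_mul, hAD]
      simp only [A]
      noncomm_ring
    have hhg : (h : Matrix (Fin d) (Fin d) R) * g *
        ((g⁻¹ : GL (Fin d) R) * (h⁻¹ : GL (Fin d) R)) = 1 := by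
      simp [mul_assoc]
    rw [hAB, sub_mul, hhg, commutatorElement_def]
    simp [mul_assoc]
  have h0 : ⁅g, h⁆ ∈ bandSubgroup (R := R) rel 0 :=
    (bandSubgroup rel 0).commutatorElement_mem ⟨hg, hg', hg.sub .one⟩ ⟨hh, hh', hh.sub .one⟩
  refine ⟨h0.1, h0.2.1, ?_⟩
  rw [hcomm]
  exact ((hA.mul hB).sub (by simpa [add_comm] using hB.mul hA)).mul (hg'.mul hh')

lemma eq_one_of_mem_bandSubgroup {g : GL (Fin d) R} (hg : g ∈ bandSubgroup (R := R) rel d) :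
    g = 1 :=
  Units.ext (sub_eq_zero.1 hg.2.2.eq_zero)

theorem isNilpotent_of_injective_of_supportedAbove {H : Type*} [Group H] (φ : H →* GL (Fin d) R)
    (hφ : Function.Injective φ) (hsupp : ∀ x, SupportedAbove rel 0 (φ x : Matrix (Fin d) (Fin d) R))
    (hdiag : ∀ x r s, rel r s → φ x r r = φ x s s) : Group.IsNilpotent H := by
  have hmem (x : H) : φ x ∈ bandSubgroup (R := R) rel 0 :=
    ⟨hsupp x, by simpa using hsupp x⁻¹, (hsupp x).sub .one⟩
  have hlcs (k : ℕ) : (⊤ : Subgroup H).lowerCentralSeries k ≤ (bandSubgroup rel k).comap φ := by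
    induction k with
    | zero => exact fun x _ => hmem x
    | succ k ih =>
      rw [Subgroup.lowerCentralSeries_succ, Subgroup.commutator_le]
      intro x hx y _
      rw [Subgroup.mem_comap, map_commutatorElement]
      exact commutator_mem_bandSubgroup_succ rel (ih hx) (hmem y) (hdiag y)
  refine Subgroup.nilpotent_iff_lowerCentralSeries.2 ⟨d, eq_bot_iff.2 fun x hx => ?_⟩
  exact hφ ((eq_one_of_mem_bandSubgroup rel (hlcs d hx)).trans (map_one φ).symm)

end GeneralLinearGroup

end SupportedAbove

end Matrix

section UpperTriangularSubgroup

open Matrix Matrix.GeneralLinearGroup AffineEquiv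

variable {K : Type*} [Field K] {d : ℕ} {Γ : Subgroup (GL (Fin d) K)}
  (hΓ : Γ ≤ upperTriangular (Fin d) K)

def ratioChar (i j : Fin d) : Γ →* Kˣ :=
  (diagUnit i).comp (Subgroup.inclusion hΓ) / (diagUnit j).comp (Subgroup.inclusion hΓ)

lemma coe_ratioChar_apply (i j : Fin d) (γ : Γ) :
    (ratioChar hΓ i j γ : K) = (γ : GL (Fin d) K) i i / (γ : GL (Fin d) K) j j := by
  rw [ratioChar, MonoidHom.div_apply, Units.val_div_eq_div_val]
  rfl

def FiniteRatio (i j : Fin d) : Prop := (Set.range (ratioChar hΓ i j)).Finite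

instance : Std.Refl (FiniteRatio hΓ) where
  refl i := by
    have : ratioChar hΓ i i = 1 := div_self' ((diagUnit i).comp (Subgroup.inclusion hΓ))
    exact (Set.finite_singleton 1).subset (Set.range_subset_singleton.2 (by rw [this]; rfl))

instance : IsTrans (Fin d) (FiniteRatio hΓ) where
  trans i j l hij hjl := by
    refine (hij.mul hjl).subset ?_
    rintro _ ⟨γ, rfl⟩
    refine ⟨_, ⟨γ, rfl⟩, _, ⟨γ, rfl⟩, ?_⟩
    simp [ratioChar]

variable (Γ) in
def ConjEntryVanishes (P : GL (Fin d) K) (i j : Fin d) : Prop :=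
  ∀ γ ∈ Γ, (P * γ * P⁻¹) i j = 0

variable {P : GL (Fin d) K} {i j : Fin d}

lemma ratioChar_mul_conjEntry_add (hP : P ∈ upperTriangular (Fin d) K) (hij : i < j)
    (hcut : ∀ l, i < l → l < j → ConjEntryVanishes Γ P i l ∨ ConjEntryVanishes Γ P l j)
    (γ δ : Γ) :
    (P * (γ * δ : Γ) * P⁻¹) i j / ((γ * δ : Γ) : GL (Fin d) K) j j =
      ratioChar hΓ i j γ * ((P * δ * P⁻¹) i j / (δ : GL (Fin d) K) j j) +
        (P * γ * P⁻¹) i j / (γ : GL (Fin d) K) j j := by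
  have hγ := hΓ γ.2
  have hδ := hΓ δ.2
  have hconj (g : Γ) : P * g * P⁻¹ ∈ upperTriangular (Fin d) K :=
    mul_mem (mul_mem hP (hΓ g.2)) (inv_mem hP)
  have hmul : (P * (γ * δ : Γ) * P⁻¹) i j =
      (γ : GL (Fin d) K) i i * (P * δ * P⁻¹) i j + (P * γ * P⁻¹) i j * (δ : GL (Fin d) K) j j := by
    have : P * (γ * δ : Γ) * P⁻¹ = (P * γ * P⁻¹) * (P * δ * P⁻¹) := by simp [mul_assoc]
    rw [this, Units.val_mul, IsUpperTriangular.mul_apply_of_forall_between (hconj γ) (hconj δ) hij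
      fun l hil hlj => (hcut l hil hlj).imp (· γ γ.2) (· δ δ.2),
      conj_apply_self hP hγ, conj_apply_self hP hδ]
  have hjj : ((γ * δ : Γ) : GL (Fin d) K) j j = (γ : GL (Fin d) K) j j * (δ : GL (Fin d) K) j j :=
    IsUpperTriangular.mul_apply_self hγ hδ j
  rw [hmul, hjj, coe_ratioChar_apply]
  have := diag_ne_zero hγ j
  have := diag_ne_zero hδ j
  field_simp

noncomputable def conjEntryHom (hP : P ∈ upperTriangular (Fin d) K) (hij : i < j)
    (hcut : ∀ l, i < l → l < j → ConjEntryVanishes Γ P i l ∨ ConjEntryVanishes Γ P l j) :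
    Γ →* (K ≃ᵃ[K] K) :=
  homOfCocycle (ratioChar hΓ i j) (fun γ => (P * γ * P⁻¹) i j / (γ : GL (Fin d) K) j j)
    (ratioChar_mul_conjEntry_add hΓ hP hij hcut)

lemma conj_transvection_mul_apply (hij : i ≠ j) (c : K) (g : GL (Fin d) K) (r s : Fin d) :
    (transvection hij c * P * g * (transvection hij c * P)⁻¹) r s =
      (Matrix.transvection i j c * (P * g * P⁻¹ : GL (Fin d) K) *
        Matrix.transvection i j (-c)) r s := by
  have : transvection hij c * P * g * (transvection hij c * P)⁻¹ =
      transvection hij c * (P * g * P⁻¹) * (transvection hij c)⁻¹ := by group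
  rw [this]
  rfl

theorem exists_conjEntryVanishes [CharZero K]
    (htame : ∀ ρ : Γ →* (K ≃ᵃ[K] K), IsVirtuallyNilpotent ρ.range)
    (hP : P ∈ upperTriangular (Fin d) K) (hij : i < j)
    (hcut : ∀ l, i < l → l < j → ConjEntryVanishes Γ P i l ∨ ConjEntryVanishes Γ P l j)
    (hinf : ¬ FiniteRatio hΓ i j) :
    ∃ Q ∈ upperTriangular (Fin d) K, ConjEntryVanishes Γ Q i j ∧
      ∀ r s, (r, s) ≠ (i, j) → (s : ℕ) + i ≤ j + r →
        ConjEntryVanishes Γ P r s → ConjEntryVanishes Γ Q r s := by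
  have hslopes : slopeHom '' ((conjEntryHom hΓ hP hij hcut).range : Set (K ≃ᵃ[K] K)) =
      Set.range (ratioChar hΓ i j) := by
    rw [MonoidHom.coe_range, ← Set.range_comp]
    exact congrArg Set.range (funext (slopeHom_homOfCocycle _ _ _))
  obtain ⟨x, hx⟩ :=
    exists_fixed_point_of_isVirtuallyNilpotent (htame _) (by rw [hslopes]; exact hinf)
  have hconj (γ : GL (Fin d) K) (hγ : γ ∈ Γ) :
      (P * γ * P⁻¹ : GL (Fin d) K).val.IsUpperTriangular :=
    mul_mem (mul_mem hP (hΓ hγ)) (inv_mem hP)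
  refine ⟨transvection hij.ne (-x) * P, mul_mem (transvection_mem_upperTriangular hij _) hP,
    fun γ hγ => ?_, fun r s hne hrs hPrs γ hγ => ?_⟩
  · have hfix := hx _ ⟨⟨γ, hγ⟩, rfl⟩
    rw [conjEntryHom, homOfCocycle_apply, coe_ratioChar_apply] at hfix
    rw [conj_transvection_mul_apply, (hconj γ hγ).transvection_conj_apply_same hij,
      conj_apply_self hP (hΓ hγ), conj_apply_self hP (hΓ hγ)]
    have := diag_ne_zero (hΓ hγ) j
    field_simp at hfix
    linear_combination hfix
  · rw [conj_transvection_mul_apply, (hconj γ hγ).transvection_conj_apply_other, hPrs γ hγ]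
    · intro hri
      have hsj : s ≠ j := fun hsj => hne (by rw [hri, hsj])
      have := Fin.val_ne_of_ne hsj
      exact Fin.lt_def.2 (by rw [hri] at hrs; omega)
    · intro hsj
      have hri : r ≠ i := fun hri => hne (by rw [hri, hsj])
      have := Fin.val_ne_of_ne hri
      exact Fin.lt_def.2 (by rw [hsj] at hrs; omega)

def VanishesUpToWidth (P : GL (Fin d) K) (w : ℕ) : Prop :=
  ∀ i j : Fin d, i < j → (j : ℕ) ≤ i + w → ¬ FiniteRatio hΓ i j → ConjEntryVanishes Γ P i j

theorem exists_vanishesUpToWidth_succ [CharZero K]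
    (htame : ∀ ρ : Γ →* (K ≃ᵃ[K] K), IsVirtuallyNilpotent ρ.range) {w : ℕ}
    (hP : P ∈ upperTriangular (Fin d) K) (hPw : VanishesUpToWidth hΓ P w) :
    ∃ Q ∈ upperTriangular (Fin d) K, VanishesUpToWidth hΓ Q (w + 1) := by
  suffices ∀ s : Finset (Fin d × Fin d), ∃ Q ∈ upperTriangular (Fin d) K,
      VanishesUpToWidth hΓ Q w ∧ ∀ p ∈ s, p.1 < p.2 → (p.2 : ℕ) = p.1 + (w + 1) →
        ¬ FiniteRatio hΓ p.1 p.2 → ConjEntryVanishes Γ Q p.1 p.2 by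
    obtain ⟨Q, hQ, hQw, hQs⟩ := this Finset.univ
    refine ⟨Q, hQ, fun i j hij hle hinf => ?_⟩
    obtain hle | heq : (j : ℕ) ≤ i + w ∨ (j : ℕ) = i + (w + 1) := by omega
    · exact hQw i j hij hle hinf
    · exact hQs (i, j) (Finset.mem_univ _) hij heq hinf
  intro s
  induction s using Finset.induction_on with
  | empty => exact ⟨P, hP, hPw, by simp⟩
  | insert p s hp ih =>
    obtain ⟨Q, hQ, hQw, hQs⟩ := ih
    obtain ⟨i, j⟩ := p
    by_cases hkill : i < j ∧ (j : ℕ) = i + (w + 1) ∧ ¬ FiniteRatio hΓ i j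
    · obtain ⟨hij, hwidth, hinf⟩ := hkill
      have hcut (l : Fin d) (hil : i < l) (hlj : l < j) :
          ConjEntryVanishes Γ Q i l ∨ ConjEntryVanishes Γ Q l j := by
        have := Fin.lt_def.1 hil
        have := Fin.lt_def.1 hlj
        -- `χᵢ / χⱼ = (χᵢ / χₗ) (χₗ / χⱼ)`, and both factors belong to narrower pairs.
        by_cases h : FiniteRatio hΓ i l
        · exact .inr (hQw l j hlj (by omega) fun h' => hinf (_root_.trans h h'))
        · exact .inl (hQw i l hil (by omega) h)
      obtain ⟨Q', hQ', hij', hpres⟩ := exists_conjEntryVanishes hΓ htame hQ hij hcut hinf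
      refine ⟨Q', hQ', fun r t hrt hle hfin => hpres r t ?_ (by omega) (hQw r t hrt hle hfin),
        fun q hq hq1 hq2 hq3 => ?_⟩
      · rintro ⟨⟩
        omega
      obtain rfl | hq := Finset.mem_insert.1 hq
      · exact hij'
      · exact hpres q.1 q.2 (fun h => hp (h ▸ hq)) (by omega) (hQs q hq hq1 hq2 hq3)
    · refine ⟨Q, hQ, hQw, fun q hq => ?_⟩
      obtain rfl | hq := Finset.mem_insert.1 hq
      · exact fun h1 h2 h3 => absurd ⟨h1, h2, h3⟩ hkill
      · exact hQs q hq

theorem exists_vanishesUpToWidth [CharZero K]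
    (htame : ∀ ρ : Γ →* (K ≃ᵃ[K] K), IsVirtuallyNilpotent ρ.range) (w : ℕ) :
    ∃ P ∈ upperTriangular (Fin d) K, VanishesUpToWidth hΓ P w := by
  induction w with
  | zero => exact ⟨1, one_mem _, fun i j hij hle => absurd hle (by have := Fin.lt_def.1 hij; omega)⟩
  | succ w ih =>
    obtain ⟨P, hP, hPw⟩ := ih
    exact exists_vanishesUpToWidth_succ hΓ htame hP hPw

def finiteRatioKernel : Subgroup Γ :=
  ⨅ p : {p : Fin d × Fin d // FiniteRatio hΓ p.1 p.2}, (ratioChar hΓ p.1.1 p.1.2).ker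

instance : (finiteRatioKernel hΓ).FiniteIndex :=
  Subgroup.finiteIndex_iInf fun p =>
    have : Finite (ratioChar hΓ p.1.1 p.1.2).range :=
      (MonoidHom.coe_range (ratioChar hΓ p.1.1 p.1.2) ▸ p.2 :
        ((ratioChar hΓ p.1.1 p.1.2).range : Set Kˣ).Finite).to_subtype
    Subgroup.finiteIndex_ker _

lemma diag_eq_of_mem_finiteRatioKernel {γ : Γ} (hγ : γ ∈ finiteRatioKernel hΓ) {r s : Fin d}
    (hrs : FiniteRatio hΓ r s) : (γ : GL (Fin d) K) r r = (γ : GL (Fin d) K) s s := by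
  have h1 : ratioChar hΓ r s γ = 1 := Subgroup.mem_iInf.1 hγ ⟨(r, s), hrs⟩
  rw [← div_eq_one_iff_eq (diag_ne_zero (hΓ γ.2) s), ← coe_ratioChar_apply hΓ, h1, Units.val_one]

lemma supportedAbove_conj (hP : P ∈ upperTriangular (Fin d) K) (hPd : VanishesUpToWidth hΓ P d)
    {γ : GL (Fin d) K} (hγ : γ ∈ Γ) :
    SupportedAbove (FiniteRatio hΓ) 0
      ((P * γ * P⁻¹ : GL (Fin d) K) : Matrix (Fin d) (Fin d) K) := by
  intro r s hrs
  rcases lt_trichotomy r s with hlt | rfl | hgt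
  · refine ⟨by_contra fun hinf => hrs (hPd r s hlt (by omega) hinf γ hγ), by
      have := Fin.lt_def.1 hlt; omega⟩
  · exact ⟨refl_of _ r, le_rfl⟩
  · exact absurd (mul_mem (mul_mem hP (hΓ hγ)) (inv_mem hP) hgt) hrs

end UpperTriangularSubgroup

open Matrix Matrix.GeneralLinearGroup in
theorem isVirtuallyNilpotent_of_forall_isVirtuallyNilpotent_range {K : Type*} [Field K] [CharZero K]
    {d : ℕ} {Γ : Subgroup (GL (Fin d) K)} (hΓ : Γ ≤ upperTriangular (Fin d) K)
    (htame : ∀ ρ : Γ →* (K ≃ᵃ[K] K), IsVirtuallyNilpotent ρ.range) : IsVirtuallyNilpotent Γ := by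
  obtain ⟨P, hP, hPd⟩ := exists_vanishesUpToWidth hΓ htame d
  let φ : finiteRatioKernel hΓ →* GL (Fin d) K :=
    (MulAut.conj P).toMonoidHom.comp (Γ.subtype.comp (finiteRatioKernel hΓ).subtype)
  refine ⟨finiteRatioKernel hΓ, isNilpotent_of_injective_of_supportedAbove (FiniteRatio hΓ) φ
    ?_ (fun x => supportedAbove_conj hΓ hP hPd x.1.2) (fun x r s hrs => ?_), inferInstance⟩
  · intro x y hxy
    exact Subtype.ext (Subtype.ext ((MulAut.conj P).injective hxy))
  · have hdiag := diag_eq_of_mem_finiteRatioKernel hΓ x.2 hrs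
    rwa [← conj_apply_self hP (hΓ x.1.2), ← conj_apply_self hP (hΓ x.1.2) s] at hdiag

/-- If `Γ` is a subgroup of `Upp_d(ℂ)` (invertible upper-triangular matrices) which is not
virtually nilpotent, then there is a group homomorphism `ρ : Γ → Aff(ℂ)` whose image is not
virtually nilpotent. Here `Aff(ℂ)` is realized as the group of affine automorphisms of the
complex line. -/
theorem stmt18 (d : ℕ) (Γ : Subgroup (GL (Fin d) ℂ))
    (hupp : ∀ g ∈ Γ, ∀ i j : Fin d, j < i →
      ((g : GL (Fin d) ℂ) : Matrix (Fin d) (Fin d) ℂ) i j = 0)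
    (hnn : ¬ IsVirtuallyNilpotent Γ) :
    ∃ ρ : Γ →* (ℂ ≃ᵃ[ℂ] ℂ), ¬ IsVirtuallyNilpotent ρ.range := by
  by_contra! htame
  exact hnn (isVirtuallyNilpotent_of_forall_isVirtuallyNilpotent_range
    (fun g hg i j hji => hupp g hg i j hji) htame)
end
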